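/- arXiv:1109.5847 — 2 statements merged into one kernel-verified Lean document; each statement's English description precedes it below -/
import Mathlib

section
/- For every non-negative integer d, the spreading number in two variables satisfies α_2(d) = ⌊d/2⌋ + 1. -/
/-- Monomials of degree `d` in `n` variables, identified with exponent vectors
`a : Fin n → ℕ` with `∑ i, a i = d`. -/
def Mset (n d : ℕ) : Finset (Fin n → ℕ) := Finset.Nat.antidiagonalTuple n d

/-- `R₁W = { a + e_i : a ∈ W, 1 ≤ i ≤ n }`, where `e_i` is the `i`-th standard
unit vector. -/
def R1 (n : ℕ) (W : Finset (Fin n → ℕ)) : Finset (Fin n → ℕ) :=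
  (W ×ˢ (Finset.univ : Finset (Fin n))).image fun p => p.1 + Pi.single p.2 1
/-- The spreading number `α_n(d) = max{ |W| : W ⊆ M_d and |R₁W| = n·|W| }`. -/
noncomputable def spread (n d : ℕ) : ℕ :=
  sSup {k | ∃ W : Finset (Fin n → ℕ),
    W ⊆ Mset n d ∧ (R1 n W).card = n * W.card ∧ W.card = k}

/-!
Every `a + e_i` with `a ∈ M_d` has degree `d + 1`, so if `|R₁W| = 2|W|` then
`2|W| ≤ |M_{d+1}| = d + 2`. Conversely the `⌊d/2⌋ + 1` monomials of degree `d` whose first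
exponent is even spread perfectly: from `a + e_i = b + e_j` the parity of the first coordinate
recovers `i`, hence `a`.
-/

lemma mem_Mset {n d : ℕ} {a : Fin n → ℕ} : a ∈ Mset n d ↔ ∑ i, a i = d :=
  Finset.Nat.mem_antidiagonalTuple

lemma card_Mset_two (d : ℕ) : (Mset 2 d).card = d + 1 := by
  simp [Mset, Finset.Nat.antidiagonalTuple_two]

lemma R1_subset_Mset {n d : ℕ} {W : Finset (Fin n → ℕ)} (hW : W ⊆ Mset n d) :
    R1 n W ⊆ Mset n (d + 1) := by
  simp only [R1, Finset.image_subset_iff, Finset.mem_product, and_imp, Prod.forall]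
  intro a i ha _
  rw [mem_Mset]
  simp only [Pi.add_apply]
  rw [Finset.sum_add_distrib, mem_Mset.mp (hW ha), Finset.sum_pi_single']
  simp

lemma mul_card_le_card_Mset_succ {n d : ℕ} {W : Finset (Fin n → ℕ)} (hW : W ⊆ Mset n d)
    (hR : (R1 n W).card = n * W.card) : n * W.card ≤ (Mset n (d + 1)).card :=
  hR ▸ Finset.card_le_card (R1_subset_Mset hW)

lemma eq_of_add_single_eq_add_single {a b : Fin 2 → ℕ} {i j : Fin 2}
    (ha : Even (a 0)) (hb : Even (b 0)) (h : a + Pi.single i 1 = b + Pi.single j 1) :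
    a = b ∧ i = j := by
  have hij : i = j := by
    have h0 := congrFun h 0
    fin_cases i <;> fin_cases j <;> simp only [Fin.zero_eta, Fin.mk_one, Fin.isValue,
      Pi.add_apply, Pi.single_eq_same, Pi.single_eq_of_ne, ne_eq, zero_ne_one, one_ne_zero,
      not_false_eq_true, add_zero, Nat.add_right_cancel_iff] at h0 ⊢
    · exact Nat.not_even_iff_odd.mpr (h0 ▸ ha.add_one) hb
    · exact Nat.not_even_iff_odd.mpr (h0 ▸ hb.add_one) ha
  subst hij
  exact ⟨add_right_cancel h, rfl⟩

def evenMonomials (d : ℕ) : Finset (Fin 2 → ℕ) :=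
  (Finset.range (d / 2 + 1)).image fun k => ![2 * k, d - 2 * k]

lemma evenMonomials_subset_Mset (d : ℕ) : evenMonomials d ⊆ Mset 2 d := by
  simp only [evenMonomials, Finset.image_subset_iff, Finset.mem_range, mem_Mset,
    Fin.sum_univ_two]
  intro k hk
  simp only [Matrix.cons_val_zero, Matrix.cons_val_one, Matrix.cons_val_fin_one]
  omega

lemma card_evenMonomials (d : ℕ) : (evenMonomials d).card = d / 2 + 1 := by
  rw [evenMonomials, Finset.card_image_of_injective _ fun k l h => by simpa using congrFun h 0,
    Finset.card_range]

lemma card_R1_evenMonomials (d : ℕ) :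
    (R1 2 (evenMonomials d)).card = 2 * (evenMonomials d).card := by
  have heven : ∀ a ∈ evenMonomials d, Even (a 0) := by
    simp [evenMonomials]
  rw [R1, Finset.card_image_of_injOn, Finset.card_product, Finset.card_univ, Fintype.card_fin,
    mul_comm]
  rintro ⟨a, i⟩ hai ⟨b, j⟩ hbj h
  simp only [Finset.coe_product, Set.mem_prod, Finset.mem_coe] at hai hbj
  obtain ⟨rfl, rfl⟩ := eq_of_add_single_eq_add_single (heven a hai.1) (heven b hbj.1) h
  rfl

/-- `α₂(d) = ⌊d/2⌋ + 1`. -/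
theorem spread_two (d : ℕ) : spread 2 d = d / 2 + 1 := by
  refine IsGreatest.csSup_eq ⟨⟨evenMonomials d, evenMonomials_subset_Mset d,
    card_R1_evenMonomials d, card_evenMonomials d⟩, ?_⟩
  rintro _ ⟨W, hW, hR, rfl⟩
  have := mul_card_le_card_Mset_succ hW hR
  rw [card_Mset_two] at this
  omega
end

section
/- For every non-negative integer d, the covering number in two variables satisfies ρ_2(d+1) = ⌈d/2⌉ + 1. -/
/-- The covering number `ρ_n(e) = min{ |W| : W ⊆ M_{e-1} and R₁W = M_e }`. -/
noncomputable def rho (n e : ℕ) : ℕ :=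
  sInf {k | ∃ W : Finset (Fin n → ℕ),
    W ⊆ Mset n (e - 1) ∧ R1 n W = Mset n e ∧ W.card = k}

lemma mem_Mset2 {d : ℕ} {a : Fin 2 → ℕ} : a ∈ Mset 2 d ↔ a 0 + a 1 = d := by
  simp [Mset, Finset.Nat.mem_antidiagonalTuple, Fin.sum_univ_two]

lemma mem_R1 {W : Finset (Fin 2 → ℕ)} {b : Fin 2 → ℕ} :
    b ∈ R1 2 W ↔ ∃ a ∈ W, ∃ j : Fin 2, a + Pi.single j 1 = b := by
  simp [R1, Finset.mem_image, Finset.mem_product]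

lemma card_Mset2 (e : ℕ) : (Mset 2 e).card = e + 1 := by
  have h : Mset 2 e = (Finset.range (e+1)).image (fun i => ![i, e - i]) := by
    ext a
    simp only [mem_Mset2, Finset.mem_image, Finset.mem_range]
    constructor
    · rintro h
      refine ⟨a 0, by omega, ?_⟩
      funext x
      fin_cases x <;> simp <;> try omega
    · rintro ⟨i, hi, rfl⟩
      simp; omega
  rw [h, Finset.card_image_of_injOn, Finset.card_range]
  intro i _ j _ hij
  have := congrFun hij 0
  simpa using this


/-- `ρ₂(d+1) = ⌈d/2⌉ + 1`. -/
theorem rho_two (d : ℕ) : rho 2 (d + 1) = (d + 1) / 2 + 1 := by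
  set W : Finset (Fin 2 → ℕ) :=
    (Finset.range ((d+1)/2+1)).image
      (fun j => ![min (2*j) d, d - min (2*j) d]) with hW
  have hsub : W ⊆ Mset 2 d := by
    intro a ha
    simp only [hW, Finset.mem_image, Finset.mem_range] at ha
    obtain ⟨j, hj, rfl⟩ := ha
    rw [mem_Mset2]; simp; try omega
  have hcov : R1 2 W = Mset 2 (d + 1) := by
    ext b
    rw [mem_R1, mem_Mset2]
    constructor
    · rintro ⟨a, ha, j, rfl⟩
      have := mem_Mset2.mp (hsub ha)
      fin_cases j <;> simp [Pi.single] <;> try omega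
    · intro hb
      by_cases hc : b 0 % 2 = 0 ∧ b 0 ≤ d
      · refine ⟨![min (2*(b 0/2)) d, d - min (2*(b 0/2)) d], ?_, 1, ?_⟩
        · simp only [hW, Finset.mem_image, Finset.mem_range]
          exact ⟨b 0 / 2, by omega, rfl⟩
        · funext x
          fin_cases x <;> simp [Pi.single] <;> try omega
      · refine ⟨![min (2*(b 0/2)) d, d - min (2*(b 0/2)) d], ?_, 0, ?_⟩
        · simp only [hW, Finset.mem_image, Finset.mem_range]
          exact ⟨b 0 / 2, by omega, rfl⟩
        · funext x
          fin_cases x <;> simp [Pi.single] <;> try omega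
  have hcard : W.card = (d + 1) / 2 + 1 := by
    rw [hW, Finset.card_image_of_injOn, Finset.card_range]
    intro i hi j hj hij
    simp only [Finset.mem_coe, Finset.mem_range] at hi hj
    have := congrFun hij 0
    simp at this
    omega
  have hmem : (d+1)/2 + 1 ∈ {k | ∃ W : Finset (Fin 2 → ℕ),
      W ⊆ Mset 2 (d + 1 - 1) ∧ R1 2 W = Mset 2 (d+1) ∧ W.card = k} :=
    ⟨W, by simpa using hsub, hcov, hcard⟩
  apply le_antisymm
  · exact Nat.sInf_le hmem
  · have hne : {k | ∃ W : Finset (Fin 2 → ℕ),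
        W ⊆ Mset 2 (d + 1 - 1) ∧ R1 2 W = Mset 2 (d+1) ∧ W.card = k}.Nonempty :=
      ⟨_, hmem⟩
    obtain ⟨W', -, hcov', hk⟩ := Nat.sInf_mem hne
    have h1 : (Mset 2 (d+1)).card = d + 2 := by rw [card_Mset2]
    have h2 : (R1 2 W').card ≤ W'.card * 2 := by
      calc (R1 2 W').card ≤ (W' ×ˢ (Finset.univ : Finset (Fin 2))).card :=
            Finset.card_image_le
        _ = W'.card * 2 := by simp [Finset.card_product]
    rw [hcov', h1] at h2
    unfold rho
    omega
end
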